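/- For all n ≥ 3, the total number of consecutive occurrences of the pattern 231 over all permutations in Av_n(123,132,321) equals (n-1)!!·⌈(n-3)/2⌉ + (n-2)!!·⌈(n-2)/2⌉. -/
import Mathlib


/-- `ConsecOcc p π i`: the word `π(i) π(i+1) … π(i+r-1)` (positions `0`-indexed)
is order-isomorphic to the pattern word `p 0, …, p (r-1)`. -/
def ConsecOcc {n r : ℕ} (p : Fin r → ℕ) (π : Equiv.Perm (Fin n)) (i : ℕ) : Prop :=
  ∃ h : i + r ≤ n, ∀ j k : Fin r,
    (π ⟨i + j.val, by have := j.isLt; omega⟩ < π ⟨i + k.val, by have := k.isLt; omega⟩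
      ↔ p j < p k)

/-- The number of consecutive occurrences of the pattern `p` in `π`. -/
noncomputable def occCount {n r : ℕ} (p : Fin r → ℕ) (π : Equiv.Perm (Fin n)) : ℕ :=
  Nat.card {i : ℕ // ConsecOcc p π i}

/-- `π` has no consecutive occurrence of any pattern in `ps`. -/
def AvoidsAll {n r : ℕ} (ps : List (Fin r → ℕ)) (π : Equiv.Perm (Fin n)) : Prop :=
  ∀ p ∈ ps, ∀ i, ¬ ConsecOcc p π i

-- Total number of consecutive occurrences of `p` over all size-`n` permutations satisfying `P`.
open scoped Classical in
noncomputable def totOcc {n r : ℕ} (p : Fin r → ℕ) (P : Equiv.Perm (Fin n) → Prop) : ℕ :=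
  ∑ π : Equiv.Perm (Fin n), if P π then occCount p π else 0

/-- The number of size-`n` permutations satisfying `P`. -/
noncomputable def classCard (n : ℕ) (P : Equiv.Perm (Fin n) → Prop) : ℕ :=
  Nat.card {π : Equiv.Perm (Fin n) // P π}

def p123 : Fin 3 → ℕ := ![1,2,3]
def p132 : Fin 3 → ℕ := ![1,3,2]
def p213 : Fin 3 → ℕ := ![2,1,3]
def p231 : Fin 3 → ℕ := ![2,3,1]
def p312 : Fin 3 → ℕ := ![3,1,2]
def p321 : Fin 3 → ℕ := ![3,2,1]


namespace Scratch
variable {n : ℕ}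

def F (π : Equiv.Perm (Fin n)) (i : ℕ) : ℕ := if h : i < n then (π ⟨i, h⟩ : ℕ) else 0

lemma F_lt (π : Equiv.Perm (Fin n)) {i : ℕ} (h : i < n) : F π i = (π ⟨i, h⟩ : ℕ) := dif_pos h

lemma F_inj (π : Equiv.Perm (Fin n)) {i j : ℕ} (hi : i < n) (hj : j < n) (hne : i ≠ j) :
    F π i ≠ F π j := by
  rw [F_lt π hi, F_lt π hj]
  intro h
  have : π ⟨i, hi⟩ = π ⟨j, hj⟩ := Fin.val_injective h
  have := π.injective this
  simp only [Fin.mk.injEq] at this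
  exact hne this

lemma F_lt_n (π : Equiv.Perm (Fin n)) {i : ℕ} (h : i < n) : F π i < n := by
  rw [F_lt π h]; exact (π ⟨i, h⟩).isLt

lemma pi_lt_iff_F (π : Equiv.Perm (Fin n)) {a b : ℕ} (ha : a < n) (hb : b < n) :
    (π ⟨a, ha⟩ < π ⟨b, hb⟩ ↔ F π a < F π b) := by
  rw [F_lt π ha, F_lt π hb, Fin.lt_def]

lemma consecOcc_iff (p : Fin 3 → ℕ) (hp : Function.Injective p) (π : Equiv.Perm (Fin n)) (i : ℕ) :
    ConsecOcc p π i ↔ i + 3 ≤ n ∧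
      ((F π i < F π (i+1) ↔ p 0 < p 1) ∧ (F π i < F π (i+2) ↔ p 0 < p 2)
        ∧ (F π (i+1) < F π (i+2) ↔ p 1 < p 2)) := by
  constructor
  · rintro ⟨h, H⟩
    refine ⟨h, ?_, ?_, ?_⟩
    · have := (pi_lt_iff_F π (show i + ((0:Fin 3):ℕ) < n by simp; omega)
        (show i + ((1:Fin 3):ℕ) < n by simp; omega)).symm.trans (H 0 1)
      simpa using this
    · have := (pi_lt_iff_F π (show i + ((0:Fin 3):ℕ) < n by simp; omega)
        (show i + ((2:Fin 3):ℕ) < n by simp; omega)).symm.trans (H 0 2)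
      simpa using this
    · have := (pi_lt_iff_F π (show i + ((1:Fin 3):ℕ) < n by simp; omega)
        (show i + ((2:Fin 3):ℕ) < n by simp; omega)).symm.trans (H 1 2)
      simpa using this
  · rintro ⟨h, h01, h02, h12⟩
    refine ⟨h, ?_⟩
    have d01 := F_inj π (show i < n by omega) (show i+1 < n by omega) (by omega)
    have d02 := F_inj π (show i < n by omega) (show i+2 < n by omega) (by omega)
    have d12 := F_inj π (show i+1 < n by omega) (show i+2 < n by omega) (by omega)
    have p01 : p 0 ≠ p 1 := fun h => by simpa using hp h
    have p02 : p 0 ≠ p 2 := fun h => by simpa using hp h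
    have p12 : p 1 ≠ p 2 := fun h => by simpa using hp h
    intro j k
    have hjk := pi_lt_iff_F π (show i + (j:ℕ) < n by have := j.isLt; omega)
        (show i + (k:ℕ) < n by have := k.isLt; omega)
    rw [hjk]
    have hj : (j:ℕ) = 0 ∨ (j:ℕ) = 1 ∨ (j:ℕ) = 2 := by omega
    have hk : (k:ℕ) = 0 ∨ (k:ℕ) = 1 ∨ (k:ℕ) = 2 := by omega
    have e0 : j = 0 ∨ j = 1 ∨ j = 2 := by
      rcases hj with h | h | h
      · exact Or.inl (Fin.ext h)
      · exact Or.inr (Or.inl (Fin.ext h))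
      · exact Or.inr (Or.inr (Fin.ext h))
    have e1 : k = 0 ∨ k = 1 ∨ k = 2 := by
      rcases hk with h | h | h
      · exact Or.inl (Fin.ext h)
      · exact Or.inr (Or.inl (Fin.ext h))
      · exact Or.inr (Or.inr (Fin.ext h))
    rcases e0 with rfl | rfl | rfl <;> rcases e1 with rfl | rfl | rfl <;>
      simp only [Fin.val_zero, Fin.val_one, Fin.val_two, Nat.add_zero] <;> omega



lemma consec_p231 (π : Equiv.Perm (Fin n)) (i : ℕ) :
    ConsecOcc p231 π i ↔ i + 3 ≤ n ∧ F π i < F π (i+1) ∧ F π (i+2) < F π i := by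
  rw [consecOcc_iff p231 (by decide) π i]
  constructor
  · rintro ⟨h, h1, h2, h3⟩
    exact ⟨h, h1.mpr (by decide), by
      have d02 := F_inj π (show i < n by omega) (show i+2 < n by omega) (by omega)
      have := h2.mp; have := (not_iff_not.mpr h2).mpr (by decide); omega⟩
  · rintro ⟨h, h1, h2⟩
    exact ⟨h, iff_of_true h1 (by decide), iff_of_false (by omega) (by decide),
      iff_of_false (by omega) (by decide)⟩

lemma consec_p123 (π : Equiv.Perm (Fin n)) (i : ℕ) :
    ConsecOcc p123 π i ↔ i + 3 ≤ n ∧ F π i < F π (i+1) ∧ F π (i+1) < F π (i+2) := by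
  rw [consecOcc_iff p123 (by decide) π i]
  constructor
  · rintro ⟨h, h1, h2, h3⟩
    exact ⟨h, h1.mpr (by decide), h3.mpr (by decide)⟩
  · rintro ⟨h, h1, h2⟩
    exact ⟨h, iff_of_true h1 (by decide), iff_of_true (by omega) (by decide),
      iff_of_true h2 (by decide)⟩

lemma consec_p132 (π : Equiv.Perm (Fin n)) (i : ℕ) :
    ConsecOcc p132 π i ↔ i + 3 ≤ n ∧ F π i < F π (i+2) ∧ F π (i+2) < F π (i+1) := by
  rw [consecOcc_iff p132 (by decide) π i]
  constructor
  · rintro ⟨h, h1, h2, h3⟩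
    refine ⟨h, h2.mpr (by decide), ?_⟩
    have d12 := F_inj π (show i+1 < n by omega) (show i+2 < n by omega) (by omega)
    have := (not_iff_not.mpr h3).mpr (by decide); omega
  · rintro ⟨h, h1, h2⟩
    exact ⟨h, iff_of_true (by omega) (by decide), iff_of_true h1 (by decide),
      iff_of_false (by omega) (by decide)⟩

lemma consec_p321 (π : Equiv.Perm (Fin n)) (i : ℕ) :
    ConsecOcc p321 π i ↔ i + 3 ≤ n ∧ F π (i+2) < F π (i+1) ∧ F π (i+1) < F π i := by
  rw [consecOcc_iff p321 (by decide) π i]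
  constructor
  · rintro ⟨h, h1, h2, h3⟩
    have d12 := F_inj π (show i+1 < n by omega) (show i+2 < n by omega) (by omega)
    have d01 := F_inj π (show i < n by omega) (show i+1 < n by omega) (by omega)
    have := (not_iff_not.mpr h3).mpr (by decide)
    have := (not_iff_not.mpr h1).mpr (by decide)
    exact ⟨h, by omega, by omega⟩
  · rintro ⟨h, h1, h2⟩
    exact ⟨h, iff_of_false (by omega) (by decide), iff_of_false (by omega) (by decide),
      iff_of_false (by omega) (by decide)⟩

/-- class membership: every window of size 3 avoids 123, 132, 321 -/
def Cls (π : Equiv.Perm (Fin n)) : Prop :=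
  ∀ i, i + 3 ≤ n →
    ¬(F π i < F π (i+1) ∧ F π (i+1) < F π (i+2)) ∧
    ¬(F π i < F π (i+2) ∧ F π (i+2) < F π (i+1)) ∧
    ¬(F π (i+2) < F π (i+1) ∧ F π (i+1) < F π i)

/-- ends with an ascent -/
def EA (π : Equiv.Perm (Fin n)) : Prop := F π (n-2) < F π (n-1)

instance (π : Equiv.Perm (Fin n)) : Decidable (EA π) := Nat.decLt _ _

lemma avoidsAll_iff (π : Equiv.Perm (Fin n)) :
    AvoidsAll [p123, p132, p321] π ↔ Cls π := by
  constructor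
  · intro H i hi
    refine ⟨?_, ?_, ?_⟩
    · intro ⟨h1, h2⟩
      exact H p123 (by simp) i ((consec_p123 π i).mpr ⟨hi, h1, h2⟩)
    · intro ⟨h1, h2⟩
      exact H p132 (by simp) i ((consec_p132 π i).mpr ⟨hi, h1, h2⟩)
    · intro ⟨h1, h2⟩
      exact H p321 (by simp) i ((consec_p321 π i).mpr ⟨hi, h1, h2⟩)
  · intro H p hp i hocc
    simp only [List.mem_cons, List.not_mem_nil, or_false] at hp
    rcases hp with rfl | rfl | rfl
    · rw [consec_p123 π i] at hocc
      exact (H i hocc.1).1 ⟨hocc.2.1, hocc.2.2⟩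
    · rw [consec_p132 π i] at hocc
      exact (H i hocc.1).2.1 ⟨hocc.2.1, hocc.2.2⟩
    · rw [consec_p321 π i] at hocc
      exact (H i hocc.1).2.2 ⟨hocc.2.1, hocc.2.2⟩

/-- the value 0 sits in one of the last two positions -/
lemma zero_pos (π : Equiv.Perm (Fin n)) (hn : 2 ≤ n) (hc : Cls π) :
    F π (n-2) = 0 ∨ F π (n-1) = 0 := by
  obtain ⟨j, hj⟩ : ∃ j : Fin n, π j = ⟨0, by omega⟩ := ⟨π.symm _, π.apply_symm_apply _⟩
  have hjn := j.isLt
  have hFj : F π (j : ℕ) = 0 := by rw [F_lt π hjn]; simp [hj]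
  by_cases hcase : (j:ℕ) + 3 ≤ n
  · exfalso
    have h1 := F_inj π (show (j:ℕ)+1 < n by omega) (show (j:ℕ)+2 < n by omega) (by omega)
    have h2 : F π ((j:ℕ)+1) ≠ 0 := by
      rw [← hFj]; exact (F_inj π (by omega) (by omega) (by omega)).symm
    have h3 : F π ((j:ℕ)+2) ≠ 0 := by
      rw [← hFj]; exact (F_inj π (by omega) (by omega) (by omega)).symm
    have := hc (j : ℕ) hcase
    omega
  · have : (j:ℕ) = n-2 ∨ (j:ℕ) = n-1 := by omega
    rcases this with h | h <;> [left; right] <;> rw [← h] <;> exact hFj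

lemma zero_last_of_not_EA (π : Equiv.Perm (Fin n)) (hn : 2 ≤ n) (hc : Cls π) (h : ¬ EA π) :
    F π (n-1) = 0 := by
  have hne := F_inj π (show n-2 < n by omega) (show n-1 < n by omega) (by omega)
  have := zero_pos π hn hc
  unfold EA at h
  omega

lemma zero_snd_of_EA (π : Equiv.Perm (Fin n)) (hn : 2 ≤ n) (hc : Cls π) (h : EA π) :
    F π (n-2) = 0 := by
  have := zero_pos π hn hc
  unfold EA at h
  omega

/-- alternation -/
lemma alt (π : Equiv.Perm (Fin n)) (hc : Cls π) {i : ℕ} (hi : i + 3 ≤ n) :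
    (F π i < F π (i+1)) ↔ ¬ (F π (i+1) < F π (i+2)) := by
  have h1 := F_inj π (show i < n by omega) (show i+1 < n by omega) (by omega)
  have h2 := F_inj π (show i+1 < n by omega) (show i+2 < n by omega) (by omega)
  have := hc i hi
  omega

lemma asc_parity (π : Equiv.Perm (Fin n)) (hc : Cls π) (hn : 2 ≤ n) :
    ∀ d i, i + 2 + d = n → ((F π i < F π (i+1)) ↔ (EA π ↔ d % 2 = 0)) := by
  intro d
  induction d with
  | zero =>
    intro i hi
    have : i = n - 2 := by omega
    subst this
    have : n - 2 + 1 = n - 1 := by omega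
    rw [this]
    unfold EA
    simp
  | succ d ih =>
    intro i hi
    have h2 := ih (i+1) (by omega)
    rw [show i+1+1 = i+2 from rfl] at h2
    have h3 := alt π hc (show i + 3 ≤ n by omega)
    have harith : ((d+1) % 2 = 0) ↔ ¬(d % 2 = 0) := by omega
    rw [h3, h2, harith]
    tauto

lemma card_range_mod2 (M r : ℕ) (hr : r < 2) :
    ((Finset.range M).filter (fun i => i % 2 = r)).card = (M + 1 - r) / 2 := by
  induction M with
  | zero => simp; omega
  | succ M ih =>
    rw [Finset.range_add_one, Finset.filter_insert]
    by_cases h : M % 2 = r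
    · rw [if_pos h, Finset.card_insert_of_notMem (by simp)]
      omega
    · rw [if_neg h]
      omega

lemma consec_iff_mem (π : Equiv.Perm (Fin n)) (hn : 3 ≤ n) (hc : Cls π) (i : ℕ) :
    ConsecOcc p231 π i ↔
      (i ∈ (Finset.range (n-2)).filter
        (fun i => i % 2 = (if EA π then n % 2 else (n+1) % 2))) := by
  rw [consec_p231, Finset.mem_filter, Finset.mem_range]
  have hpar : ∀ (hi : i + 3 ≤ n), (F π i < F π (i+1)) ↔ (EA π ↔ (n - i - 2) % 2 = 0) :=
    fun hi => asc_parity π hc (by omega) (n - i - 2) i (by omega)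
  constructor
  · rintro ⟨hi, hasc, _⟩
    refine ⟨by omega, ?_⟩
    have := (hpar hi).mp hasc
    by_cases hea : EA π
    · rw [if_pos hea]
      have := this.mp hea
      omega
    · rw [if_neg hea]
      have : ¬ ((n - i - 2) % 2 = 0) := fun hh => hea (this.mpr hh)
      omega
  · rintro ⟨hi, hmod⟩
    have hi3 : i + 3 ≤ n := by omega
    have hasc : F π i < F π (i+1) := by
      apply (hpar hi3).mpr
      by_cases hea : EA π
      · rw [if_pos hea] at hmod
        exact iff_of_true hea (by omega)
      · rw [if_neg hea] at hmod
        exact iff_of_false hea (by omega)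
    refine ⟨hi3, hasc, ?_⟩
    have hcl := hc i hi3
    have d01 := F_inj π (show i < n by omega) (show i+1 < n by omega) (by omega)
    have d02 := F_inj π (show i < n by omega) (show i+2 < n by omega) (by omega)
    have d12 := F_inj π (show i+1 < n by omega) (show i+2 < n by omega) (by omega)
    omega

lemma occCount_eq (π : Equiv.Perm (Fin n)) (hn : 3 ≤ n) (hc : Cls π) :
    occCount p231 π = if EA π then (n-2)/2 else (n-1)/2 := by
  unfold occCount
  rw [Nat.card_congr (Equiv.subtypeEquivRight (consec_iff_mem π hn hc))]
  rw [Nat.card_eq_fintype_card, Fintype.card_coe]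
  by_cases hea : EA π
  · rw [if_pos hea]
    simp only [if_pos hea]
    rw [card_range_mod2 _ _ (by omega)]
    omega
  · rw [if_neg hea]
    simp only [if_neg hea]
    rw [card_range_mod2 _ _ (by omega)]
    omega

/-! ### extension / restriction machinery -/

def extP {m : ℕ} (v : Fin (m+1)) (σ : Equiv.Perm (Fin m)) : Equiv.Perm (Fin (m+1)) :=
  finSuccEquivLast.trans ((Equiv.optionCongr σ).trans (finSuccEquiv' v).symm)

lemma extP_castSucc {m : ℕ} (v : Fin (m+1)) (σ : Equiv.Perm (Fin m)) (i : Fin m) :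
    extP v σ (Fin.castSucc i) = v.succAbove (σ i) := by
  simp [extP, finSuccEquivLast_castSucc, finSuccEquiv'_symm_some]

lemma extP_last {m : ℕ} (v : Fin (m+1)) (σ : Equiv.Perm (Fin m)) :
    extP v σ (Fin.last m) = v := by
  simp [extP, finSuccEquivLast_last, finSuccEquiv'_symm_none]

def resP {m : ℕ} (π : Equiv.Perm (Fin (m+1))) : Equiv.Perm (Fin m) :=
  Equiv.removeNone (finSuccEquivLast.symm.trans (π.trans (finSuccEquiv' (π (Fin.last m)))))

lemma resP_key {m : ℕ} (π : Equiv.Perm (Fin (m+1))) (i : Fin m) :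
    (π (Fin.last m)).succAbove (resP π i) = π (Fin.castSucc i) := by
  have hne : π (Fin.castSucc i) ≠ π (Fin.last m) := by
    intro h
    have h2 : (i : ℕ) = m := by simpa using congrArg Fin.val (π.injective h)
    have := i.isLt
    omega
  obtain ⟨j, hj⟩ := Fin.exists_succAbove_eq hne
  set e := finSuccEquivLast.symm.trans (π.trans (finSuccEquiv' (π (Fin.last m)))) with he
  have h1 : e (some i) = some j := by
    simp only [he, Equiv.trans_apply, finSuccEquivLast_symm_some, ← hj,
      finSuccEquiv'_succAbove]
  have h2 : some (resP π i) = e (some i) := Equiv.removeNone_some _ ⟨j, h1⟩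
  rw [h1] at h2
  rw [resP] at h2 ⊢
  rw [← he]
  cases h2
  exact hj

lemma extP_resP {m : ℕ} (π : Equiv.Perm (Fin (m+1))) :
    extP (π (Fin.last m)) (resP π) = π := by
  apply Equiv.ext
  intro j
  induction j using Fin.lastCases with
  | last => rw [extP_last]
  | cast i => rw [extP_castSucc, resP_key]

lemma resP_extP {m : ℕ} (v : Fin (m+1)) (σ : Equiv.Perm (Fin m)) :
    resP (extP v σ) = σ := by
  apply Equiv.ext
  intro i
  apply Fin.succAbove_right_injective (p := v)
  have := resP_key (extP v σ) i
  rw [extP_last] at this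
  rw [this, extP_castSucc]

/-- the "shift" function corresponding to succAbove on values -/
def sA (a x : ℕ) : ℕ := if x < a then x else x + 1

lemma succAbove_val {m : ℕ} (v : Fin (m+1)) (j : Fin m) :
    ((v.succAbove j : Fin (m+1)) : ℕ) = sA (v : ℕ) (j : ℕ) := by
  unfold sA
  by_cases h : Fin.castSucc j < v
  · rw [Fin.succAbove_of_castSucc_lt _ _ h]
    have : ((Fin.castSucc j : Fin (m+1)) : ℕ) = (j : ℕ) := rfl
    rw [this, if_pos (by simpa [Fin.lt_def] using h)]
  · rw [Fin.succAbove_of_le_castSucc _ _ (not_lt.mp h)]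
    have hle : (v : ℕ) ≤ (j : ℕ) := by
      have := not_lt.mp h
      simpa [Fin.le_def] using this
    have : ((Fin.succ j : Fin (m+1)) : ℕ) = (j : ℕ) + 1 := rfl
    rw [this, if_neg (by omega)]

lemma F_extP {m : ℕ} (v : Fin (m+1)) (σ : Equiv.Perm (Fin m)) {i : ℕ} (hi : i < m) :
    F (extP v σ) i = sA (v : ℕ) (F σ i) := by
  rw [F_lt (extP v σ) (show i < m+1 by omega), F_lt σ hi]
  have : (⟨i, show i < m+1 by omega⟩ : Fin (m+1)) = Fin.castSucc ⟨i, hi⟩ := rfl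
  rw [this, extP_castSucc, succAbove_val]

lemma F_extP_last {m : ℕ} (v : Fin (m+1)) (σ : Equiv.Perm (Fin m)) :
    F (extP v σ) m = (v : ℕ) := by
  rw [F_lt (extP v σ) (show m < m+1 by omega)]
  have : (⟨m, show m < m+1 by omega⟩ : Fin (m+1)) = Fin.last m := rfl
  rw [this, extP_last]

lemma sA_lt_iff (a x y : ℕ) : sA a x < sA a y ↔ x < y := by unfold sA; split <;> split <;> omega

lemma sA_eq_zero_iff (a x : ℕ) (ha : 0 < a) : sA a x = 0 ↔ x = 0 := by unfold sA; split <;> omega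

lemma sA_zero (x : ℕ) : sA 0 x = x + 1 := by simp [sA]

section Transfer
variable {m : ℕ}

lemma D_notEA (hm : 1 ≤ m) (σ : Equiv.Perm (Fin m)) : ¬ EA (extP 0 σ) := by
  unfold EA
  rw [show m+1-1 = m from rfl, F_extP_last]
  simp

lemma D_iff (hm : 2 ≤ m) (σ : Equiv.Perm (Fin m)) :
    Cls (extP 0 σ) ↔ (Cls σ ∧ EA σ) := by
  have hF : ∀ i, i < m → F (extP 0 σ) i = F σ i + 1 := by
    intro i hi
    rw [F_extP (0 : Fin (m+1)) σ hi]
    simp [sA_zero]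
  have hFm : F (extP 0 σ) m = 0 := by
    rw [F_extP_last]; rfl
  constructor
  · intro hc
    constructor
    · intro i hi
      have := hc i (by omega)
      rw [hF i (by omega), hF (i+1) (by omega), hF (i+2) (by omega)] at this
      omega
    · have := hc (m-2) (by omega)
      rw [show m-2+2 = m by omega, hFm, hF (m-2) (by omega), hF (m-2+1) (by omega)] at this
      have hinj := F_inj σ (show m-2 < m by omega) (show m-1 < m by omega) (by omega)
      unfold EA
      rw [show m-2+1 = m-1 by omega] at this
      omega
  · rintro ⟨hc, hea⟩
    intro i hi
    by_cases hcase : i + 3 ≤ m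
    · have := hc i hcase
      rw [hF i (by omega), hF (i+1) (by omega), hF (i+2) (by omega)]
      omega
    · have hieq : i = m - 2 := by omega
      subst hieq
      rw [show m-2+2 = m by omega, hFm, hF (m-2) (by omega), hF (m-2+1) (by omega)]
      unfold EA at hea
      rw [show m-2+1 = m-1 by omega]
      omega

lemma E_EA (hm : 2 ≤ m) (σ : Equiv.Perm (Fin m)) (w : Fin m) (h0 : F σ (m-1) = 0) :
    EA (extP w.succ σ) := by
  unfold EA
  rw [show m+1-1 = m from rfl, show m+1-2 = m-1 by omega, F_extP_last,
    F_extP _ σ (show m-1 < m by omega), h0]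
  have : sA ((w.succ : Fin (m+1)) : ℕ) 0 = 0 := by
    unfold sA
    rw [if_pos]
    simp [Fin.val_succ]
  rw [this]
  simp [Fin.val_succ]

lemma E_iff (hm : 2 ≤ m) (σ : Equiv.Perm (Fin m)) (w : Fin m) (h0 : F σ (m-1) = 0) :
    Cls (extP w.succ σ) ↔ Cls σ := by
  set v := (w.succ : Fin (m+1)) with hv
  have hF : ∀ i, i < m → F (extP v σ) i = sA (v : ℕ) (F σ i) :=
    fun i hi => F_extP v σ hi
  have hFm : F (extP v σ) m = (v : ℕ) := F_extP_last v σ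
  have hvpos : 0 < (v : ℕ) := by simp [hv, Fin.val_succ]
  constructor
  · intro hc i hi
    have := hc i (by omega)
    rw [hF i (by omega), hF (i+1) (by omega), hF (i+2) (by omega)] at this
    simp only [sA_lt_iff] at this
    exact this
  · intro hc i hi
    by_cases hcase : i + 3 ≤ m
    · have := hc i hcase
      rw [hF i (by omega), hF (i+1) (by omega), hF (i+2) (by omega)]
      simp only [sA_lt_iff]
      exact this
    · have hieq : i = m - 2 := by omega
      subst hieq
      rw [show m-2+2 = m by omega, hFm, hF (m-2) (by omega), hF (m-2+1) (by omega),
        show m-2+1 = m-1 by omega, h0]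
      have h00 : sA (v : ℕ) 0 = 0 := by unfold sA; rw [if_pos hvpos]
      rw [h00]
      have ha : sA (v:ℕ) (F σ (m-2)) ≠ 0 := by
        intro h
        rw [sA_eq_zero_iff _ _ hvpos] at h
        exact (F_inj σ (show m-2 < m by omega) (show m-1 < m by omega) (by omega)) (by omega)
      omega

end Transfer

open scoped Classical in
noncomputable def cntE (k : ℕ) : ℕ :=
  ((Finset.univ : Finset (Equiv.Perm (Fin k))).filter (fun π => Cls π ∧ EA π)).card

open scoped Classical in
noncomputable def cntD (k : ℕ) : ℕ :=
  ((Finset.univ : Finset (Equiv.Perm (Fin k))).filter (fun π => Cls π ∧ ¬ EA π)).card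

lemma pi_last_eq_zero {m : ℕ} (π : Equiv.Perm (Fin (m+1))) (h : F π m = 0) :
    π (Fin.last m) = 0 := by
  rw [F_lt π (show m < m+1 by omega)] at h
  have : (⟨m, by omega⟩ : Fin (m+1)) = Fin.last m := rfl
  rw [this] at h
  exact Fin.ext h

lemma cntD_succ {m : ℕ} (hm : 2 ≤ m) : cntD (m+1) = cntE m := by
  classical
  unfold cntD cntE
  apply Finset.card_bij' (fun π _ => resP π) (fun σ _ => extP 0 σ)
  · intro π hπ
    simp only [Finset.mem_filter, Finset.mem_univ, true_and] at hπ ⊢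
    have hlast : π (Fin.last m) = 0 := by
      apply pi_last_eq_zero
      have := zero_last_of_not_EA π (show 2 ≤ m+1 by omega) hπ.1 hπ.2
      rwa [show m+1-1 = m from rfl] at this
    have hext : extP 0 (resP π) = π := by rw [← hlast]; exact extP_resP π
    have := hπ.1
    rw [← hext] at this
    exact (D_iff hm (resP π)).mp this
  · intro σ hσ
    simp only [Finset.mem_filter, Finset.mem_univ, true_and] at hσ ⊢
    exact ⟨(D_iff hm σ).mpr hσ, D_notEA (by omega) σ⟩
  · intro π hπ
    simp only [Finset.mem_filter, Finset.mem_univ, true_and] at hπ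
    have hlast : π (Fin.last m) = 0 := by
      apply pi_last_eq_zero
      have := zero_last_of_not_EA π (show 2 ≤ m+1 by omega) hπ.1 hπ.2
      rwa [show m+1-1 = m from rfl] at this
    rw [← hlast]
    exact extP_resP π
  · intro σ _
    exact resP_extP 0 σ

lemma F_last {m : ℕ} (π : Equiv.Perm (Fin (m+1))) : F π m = (π (Fin.last m) : ℕ) := by
  rw [F_lt π (show m < m+1 by omega)]; rfl

lemma sA_zero_imp {a x : ℕ} (h : sA a x = 0) : x = 0 := by unfold sA at h; split at h <;> omega

lemma F_snd_zero_of_EA {m : ℕ} (hm : 2 ≤ m) (π : Equiv.Perm (Fin (m+1)))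
    (hc : Cls π) (hea : EA π) : F π (m-1) = 0 := by
  have := zero_snd_of_EA π (show 2 ≤ m+1 by omega) hc hea
  rwa [show m+1-2 = m-1 by omega] at this

lemma last_ne_zero_of_EA {m : ℕ} (hm : 2 ≤ m) (π : Equiv.Perm (Fin (m+1)))
    (hc : Cls π) (hea : EA π) : π (Fin.last m) ≠ 0 := by
  have h0 := F_snd_zero_of_EA hm π hc hea
  have hne : F π m ≠ F π (m-1) := F_inj π (by omega) (by omega) (by omega)
  intro hcontra
  apply hne
  rw [h0, F_last, hcontra]
  rfl

lemma res_snd_zero {m : ℕ} (hm : 2 ≤ m) (π : Equiv.Perm (Fin (m+1)))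
    (h0 : F π (m-1) = 0) : F (resP π) (m-1) = 0 := by
  have hF := F_extP (π (Fin.last m)) (resP π) (show m-1 < m by omega)
  rw [extP_resP] at hF
  rw [h0] at hF
  exact sA_zero_imp hF.symm

lemma cntE_succ {m : ℕ} (hm : 2 ≤ m) : cntE (m+1) = cntD m * m := by
  classical
  have h1 : cntE (m+1) = (((Finset.univ : Finset (Equiv.Perm (Fin m))).filter
      (fun π => Cls π ∧ ¬ EA π)) ×ˢ (Finset.univ : Finset (Fin m))).card := by
    unfold cntE
    refine Finset.card_bij'
      (fun π hπ => (resP π, (π (Fin.last m)).pred (by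
        simp only [Finset.mem_filter, Finset.mem_univ, true_and] at hπ
        exact last_ne_zero_of_EA hm π hπ.1 hπ.2)))
      (fun σw _ => extP (σw.2.succ) σw.1) ?_ ?_ ?_ ?_
    · intro π hπ
      simp only [Finset.mem_filter, Finset.mem_univ, true_and] at hπ
      rw [Finset.mem_product]
      refine ⟨?_, Finset.mem_univ _⟩
      simp only [Finset.mem_filter, Finset.mem_univ, true_and]
      have h0 := F_snd_zero_of_EA hm π hπ.1 hπ.2
      have hres0 := res_snd_zero hm π h0
      constructor
      · have hiff := E_iff hm (resP π) ((π (Fin.last m)).pred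
          (last_ne_zero_of_EA hm π hπ.1 hπ.2)) hres0
        rw [Fin.succ_pred, extP_resP] at hiff
        exact hiff.mp hπ.1
      · intro hea
        unfold EA at hea
        omega
    · intro σw hσw
      rw [Finset.mem_product] at hσw
      obtain ⟨hσ, -⟩ := hσw
      simp only [Finset.mem_filter, Finset.mem_univ, true_and] at hσ ⊢
      have h0 : F σw.1 (m-1) = 0 := by
        have := zero_last_of_not_EA σw.1 hm hσ.1 hσ.2
        rwa [show m-1 = m-1 from rfl] at this
      exact ⟨(E_iff hm σw.1 σw.2 h0).mpr hσ.1, E_EA hm σw.1 σw.2 h0⟩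
    · intro π hπ
      simp only
      rw [Fin.succ_pred]
      exact extP_resP π
    · intro σw hσw
      have h2 : (extP σw.2.succ σw.1) (Fin.last m) = σw.2.succ := extP_last _ _
      refine Prod.ext ?_ ?_
      · exact resP_extP _ _
      · simp only
        apply Fin.succ_injective
        rw [Fin.succ_pred, h2]
  rw [h1, Finset.card_product, Finset.card_univ, Fintype.card_fin]
  rfl

lemma perm_eq_of_F {k : ℕ} (π τ : Equiv.Perm (Fin k)) (h : ∀ i, i < k → F π i = F τ i) :
    π = τ := by
  apply Equiv.ext
  intro i
  have := h i.val i.isLt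
  rw [F_lt π i.isLt, F_lt τ i.isLt] at this
  apply Fin.ext
  simpa using this

lemma cls_two (π : Equiv.Perm (Fin 2)) : Cls π := fun i hi => absurd hi (by omega)

lemma fin2_cases (π : Equiv.Perm (Fin 2)) :
    (F π 0 = 0 ∧ F π 1 = 1) ∨ (F π 0 = 1 ∧ F π 1 = 0) := by
  have h0 := F_lt_n π (show 0 < 2 by omega)
  have h1 := F_lt_n π (show 1 < 2 by omega)
  have hne := F_inj π (show 0 < 2 by omega) (show 1 < 2 by omega) (by omega)
  omega

lemma F_refl_two : ∀ i, i < 2 → F (Equiv.refl (Fin 2)) i = i := by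
  intro i hi
  rw [F_lt _ hi]
  rfl

lemma F_swap_two : F (Equiv.swap (0 : Fin 2) 1) 0 = 1 ∧ F (Equiv.swap (0 : Fin 2) 1) 1 = 0 := by
  constructor
  · rw [F_lt _ (show 0 < 2 by omega)]
    decide
  · rw [F_lt _ (show 1 < 2 by omega)]
    decide

lemma cntE_two : cntE 2 = 1 := by
  classical
  unfold cntE
  rw [Finset.card_eq_one]
  refine ⟨Equiv.refl _, ?_⟩
  ext π
  simp only [Finset.mem_filter, Finset.mem_univ, true_and, Finset.mem_singleton]
  constructor
  · rintro ⟨-, hea⟩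
    unfold EA at hea
    rw [show (2:ℕ)-2 = 0 from rfl, show (2:ℕ)-1 = 1 from rfl] at hea
    apply perm_eq_of_F
    intro i hi
    rw [F_refl_two i hi]
    rcases fin2_cases π with h | h <;> (interval_cases i <;> omega)
  · rintro rfl
    refine ⟨cls_two _, ?_⟩
    unfold EA
    rw [show (2:ℕ)-2 = 0 from rfl, show (2:ℕ)-1 = 1 from rfl,
      F_refl_two 0 (by omega), F_refl_two 1 (by omega)]
    omega

lemma cntD_two : cntD 2 = 1 := by
  classical
  unfold cntD
  rw [Finset.card_eq_one]
  refine ⟨Equiv.swap 0 1, ?_⟩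
  ext π
  simp only [Finset.mem_filter, Finset.mem_univ, true_and, Finset.mem_singleton]
  constructor
  · rintro ⟨-, hea⟩
    unfold EA at hea
    rw [show (2:ℕ)-2 = 0 from rfl, show (2:ℕ)-1 = 1 from rfl] at hea
    apply perm_eq_of_F
    intro i hi
    rcases fin2_cases π with h | h <;>
      (interval_cases i <;> [rw [F_swap_two.1]; rw [F_swap_two.2]] <;> omega)
  · rintro rfl
    refine ⟨cls_two _, ?_⟩
    unfold EA
    rw [show (2:ℕ)-2 = 0 from rfl, show (2:ℕ)-1 = 1 from rfl,
      F_swap_two.1, F_swap_two.2]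
    omega

lemma counts (k : ℕ) (hk : 2 ≤ k) :
    cntE k = Nat.doubleFactorial (k-1) ∧ cntD k = Nat.doubleFactorial (k-2) := by
  induction k, hk using Nat.le_induction with
  | base => exact ⟨cntE_two, cntD_two⟩
  | succ m hm ih =>
    obtain ⟨j, rfl⟩ : ∃ j, m = j + 2 := ⟨m - 2, by omega⟩
    constructor
    · rw [cntE_succ hm, ih.2]
      rw [show j+2+1-1 = j+2 from rfl, show j+2-2 = j from rfl,
        Nat.doubleFactorial_add_two]
      ring
    · rw [cntD_succ hm, ih.1]
      rfl

lemma ceil_nat_div2 (k : ℕ) : ⌈(k:ℚ)/2⌉₊ = (k+1)/2 := by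
  rcases Nat.eq_zero_or_pos k with rfl | hk
  · simp
  · rw [Nat.ceil_eq_iff (by omega)]
    constructor
    · rw [lt_div_iff₀ (by norm_num : (0:ℚ) < 2)]
      have : (((k+1)/2 - 1 : ℕ) : ℚ) * 2 < (k : ℕ) := by
        have h : ((k+1)/2 - 1 : ℕ) * 2 < k := by omega
        exact_mod_cast h
      exact_mod_cast this
    · rw [div_le_iff₀ (by norm_num : (0:ℚ) < 2)]
      have : ((k:ℕ):ℚ) ≤ (((k+1)/2 : ℕ) : ℚ) * 2 := by
        have h : k ≤ ((k+1)/2) * 2 := by omega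
        exact_mod_cast h
      exact_mod_cast this

lemma ceil3 (n : ℕ) (hn : 3 ≤ n) : ⌈((n:ℚ)-3)/2⌉₊ = (n-2)/2 := by
  rw [show ((n:ℚ) - 3) = ((n - 3 : ℕ) : ℚ) by rw [Nat.cast_sub hn]; norm_num]
  rw [ceil_nat_div2]
  omega

lemma ceil2 (n : ℕ) (hn : 3 ≤ n) : ⌈((n:ℚ)-2)/2⌉₊ = (n-1)/2 := by
  rw [show ((n:ℚ) - 2) = ((n - 2 : ℕ) : ℚ) by rw [Nat.cast_sub (by omega)]; norm_num]
  rw [ceil_nat_div2]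
  omega

theorem stmt0' (n : ℕ) (hn : 3 ≤ n) :
    totOcc p231 (AvoidsAll (n := n) [p123, p132, p321]) =
      Nat.doubleFactorial (n - 1) * ⌈((n : ℚ) - 3) / 2⌉₊
        + Nat.doubleFactorial (n - 2) * ⌈((n : ℚ) - 2) / 2⌉₊ := by
  classical
  unfold totOcc
  rw [← Finset.sum_filter]
  rw [Finset.filter_congr (fun π _ => (avoidsAll_iff π))]
  rw [← Finset.sum_filter_add_sum_filter_not
    ((Finset.univ : Finset (Equiv.Perm (Fin n))).filter Cls) EA (occCount p231)]
  rw [Finset.filter_filter, Finset.filter_filter]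
  rw [Finset.sum_const_nat (m := (n-2)/2) (fun π hπ => by
    simp only [Finset.mem_filter, Finset.mem_univ, true_and] at hπ
    rw [occCount_eq π hn hπ.1, if_pos hπ.2])]
  rw [Finset.sum_const_nat (m := (n-1)/2) (fun π hπ => by
    simp only [Finset.mem_filter, Finset.mem_univ, true_and] at hπ
    rw [occCount_eq π hn hπ.1, if_neg hπ.2])]
  have hE : ((Finset.univ : Finset (Equiv.Perm (Fin n))).filter
      (fun π => Cls π ∧ EA π)).card = Nat.doubleFactorial (n-1) :=
    (counts n (by omega)).1
  have hD : ((Finset.univ : Finset (Equiv.Perm (Fin n))).filter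
      (fun π => Cls π ∧ ¬ EA π)).card = Nat.doubleFactorial (n-2) :=
    (counts n (by omega)).2
  rw [hE, hD, ceil3 n hn, ceil2 n hn]

end Scratch

theorem stmt0 (n : ℕ) (hn : 3 ≤ n) :
    totOcc p231 (AvoidsAll (n := n) [p123, p132, p321]) =
      Nat.doubleFactorial (n - 1) * ⌈((n : ℚ) - 3) / 2⌉₊
        + Nat.doubleFactorial (n - 2) * ⌈((n : ℚ) - 2) / 2⌉₊ := by
  exact Scratch.stmt0' n hn
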